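/- Let G be a k-regular finite simple connected graph with k ≥ 4 that is λ''-connected and λ''-optimal, and suppose the girth of G is at least 4. Then G is super-λ' and k − 2 ≤ ρ'(G) ≤ k − 1. -/

import Mathlib

open SimpleGraph

variable {V : Type*}

/-- The degree of a vertex, as the cardinality of its neighbor set. -/
noncomputable def degN (G : SimpleGraph V) (v : V) : ℕ := (G.neighborSet v).ncard

/-- The minimum degree `δ(G)`. -/
noncomputable def minDeg (G : SimpleGraph V) : ℕ := sInf {k | ∃ v, degN G v = k}

/-- `d_G(X)`: the number of edges of `G` with exactly one endpoint in `X`. -/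
noncomputable def dOut (G : SimpleGraph V) (X : Set V) : ℕ :=
  {e ∈ G.edgeSet | ∃ x ∈ X, ∃ y ∈ Xᶜ, e = s(x, y)}.ncard

/-- `F` is an `h`-extra edge-cut of `G`: a set of edges of `G` whose removal disconnects `G`
and such that every connected component of `G - F` has more than `h` vertices. -/
def IsExtraEdgeCut (G : SimpleGraph V) (h : ℕ) (F : Set (Sym2 V)) : Prop :=
  F ⊆ G.edgeSet ∧ ¬(G.deleteEdges F).Connected ∧
    ∀ c : (G.deleteEdges F).ConnectedComponent, h < c.supp.ncard

/-- `G` is `λ^(h)`-connected: an `h`-extra edge-cut exists. -/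
def LambdaConn (G : SimpleGraph V) (h : ℕ) : Prop := ∃ F, IsExtraEdgeCut G h F

/-- The `h`-extra edge-connectivity `λ^(h)(G)`: the minimum cardinality of an
`h`-extra edge-cut. -/
noncomputable def lambdaH (G : SimpleGraph V) (h : ℕ) : ℕ :=
  sInf {k | ∃ F, IsExtraEdgeCut G h F ∧ F.ncard = k}

/-- `ξ_h(G)`: the minimum of `d_G(X)` over vertex sets `X` of size `h + 1` inducing a
connected subgraph. -/
noncomputable def xiH (G : SimpleGraph V) (h : ℕ) : ℕ :=
  sInf {k | ∃ X : Set V, X.ncard = h + 1 ∧ (G.induce X).Connected ∧ dOut G X = k}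

/-- `G` is super-`λ^(h)`: it is connected, `λ^(h)`-connected, `λ^(h)`-optimal
(`λ^(h)(G) = ξ_h(G)`), and every minimum `h`-extra edge-cut leaves a component with
exactly `h + 1` vertices. -/
def SuperLambda (G : SimpleGraph V) (h : ℕ) : Prop :=
  G.Connected ∧ LambdaConn G h ∧ lambdaH G h = xiH G h ∧
    ∀ F : Set (Sym2 V), IsExtraEdgeCut G h F → F.ncard = lambdaH G h →
      ∃ c : (G.deleteEdges F).ConnectedComponent, c.supp.ncard = h + 1

/-- The persistence `ρ^(h)(G)`: the largest `m` such that `G - F` is super-`λ^(h)` for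
every set `F` of at most `m` edges of `G`. -/
noncomputable def rhoH (G : SimpleGraph V) (h : ℕ) : ℕ :=
  sSup {m : ℕ | ∀ F : Set (Sym2 V), F ⊆ G.edgeSet → F.ncard ≤ m →
    SuperLambda (G.deleteEdges F) h}

/-- `ξ(G)`: the minimum edge-degree `deg x + deg y - 2` over the edges `xy` of `G`. -/
noncomputable def xiEdge (G : SimpleGraph V) : ℕ :=
  sInf {k | ∃ x y, G.Adj x y ∧ degN G x + degN G y - 2 = k}

/-- `η(G)`: the number of edges of `G` whose edge-degree equals `ξ(G)`. -/
noncomputable def eta (G : SimpleGraph V) : ℕ :=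
  {e ∈ G.edgeSet | ∃ x y, e = s(x, y) ∧ degN G x + degN G y - 2 = xiEdge G}.ncard

/-! Since `G` is `k`-regular without triangles, every set of three vertices has at least
`3k - 4` boundary edges, so by `λ''`-optimality every `2`-extra edge-cut has at least
`3k - 4` edges. Let `H = G - F` with `|F| ≤ k - 2`. A `1`-extra edge-cut `S` of `H` either
isolates an edge `xy`, and then `|S| ≥ d_H({x, y}) ≥ ξ(H)`, or it makes `F ∪ S` a `2`-extra
edge-cut of `G`, and then `|S| ≥ 3k - 4 - |F| > ξ(H)`. Since `H` has minimum degree `2` and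
no triangles, the boundary of each edge of `H` is a `1`-extra edge-cut, so `λ'(H) = ξ(H)` and
`H` is super-`λ'`. Hence `ρ'(G) ≥ k - 2`, while deleting the `k` edges at a vertex isolates
it, so `ρ'(G) ≤ k - 1`. -/

namespace SimpleGraph

variable {G : SimpleGraph V}

def edgeBoundary (G : SimpleGraph V) (X : Set V) : Set (Sym2 V) :=
  {e ∈ G.edgeSet | ∃ x ∈ X, ∃ y ∈ Xᶜ, e = s(x, y)}

lemma dOut_eq_ncard_edgeBoundary (G : SimpleGraph V) (X : Set V) :
    dOut G X = (G.edgeBoundary X).ncard := rfl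

lemma edgeBoundary_subset_edgeSet (G : SimpleGraph V) (X : Set V) :
    G.edgeBoundary X ⊆ G.edgeSet := fun _ he => he.1

lemma mk_notMem_edgeBoundary {X : Set V} {a b : V} (h : a ∈ X ↔ b ∈ X) :
    s(a, b) ∉ G.edgeBoundary X := by
  rintro ⟨-, c, hc, d, hd, he⟩
  rcases Sym2.eq_iff.mp he with ⟨rfl, rfl⟩ | ⟨rfl, rfl⟩
  · exact hd (h.mp hc)
  · exact hd (h.mpr hc)

lemma edgeBoundary_eq_biUnion (G : SimpleGraph V) (X : Set V) :
    G.edgeBoundary X = ⋃ a ∈ X, (fun b => s(a, b)) '' (G.neighborSet a \ X) := by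
  ext e
  simp only [edgeBoundary, Set.mem_ofPred_eq, Set.mem_iUnion, Set.mem_image, Set.mem_sdiff,
    mem_neighborSet, Set.mem_compl_iff, exists_prop]
  constructor
  · rintro ⟨he, a, ha, b, hb, rfl⟩
    exact ⟨a, ha, b, ⟨he, hb⟩, rfl⟩
  · rintro ⟨a, ha, b, ⟨hab, hb⟩, rfl⟩
    exact ⟨hab, a, ha, b, hb, rfl⟩

lemma dOut_eq_sum [Finite V] (G : SimpleGraph V) (X : Finset V) :
    dOut G X = ∑ a ∈ X, (G.neighborSet a \ X).ncard := by
  have hdisj : (X : Set V).PairwiseDisjoint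
      fun a => (fun b => s(a, b)) '' (G.neighborSet a \ X) := by
    rintro a ha a' - hne
    refine Set.disjoint_left.mpr ?_
    rintro _ ⟨b, -, rfl⟩ ⟨b', ⟨-, hb'⟩, he⟩
    rcases Sym2.eq_iff.mp he with ⟨h, -⟩ | ⟨-, h⟩
    · exact hne h.symm
    · exact hb' (h ▸ ha)
  rw [dOut_eq_ncard_edgeBoundary, edgeBoundary_eq_biUnion,
    X.finite_toSet.ncard_biUnion (fun _ _ => Set.toFinite _) hdisj, finsum_mem_coe_finset]
  exact Finset.sum_congr rfl fun a _ =>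
    Set.ncard_image_of_injective _ fun _ _ h => Sym2.congr_right.mp h

lemma dOut_add_sum_card_filter_adj [Finite V] [DecidableRel G.Adj] (X : Finset V) :
    dOut G X + ∑ a ∈ X, (X.filter (G.Adj a)).card = ∑ a ∈ X, degN G a := by
  rw [dOut_eq_sum, ← Finset.sum_add_distrib]
  refine Finset.sum_congr rfl fun a _ => ?_
  have hinter : G.neighborSet a ∩ X = ↑(X.filter (G.Adj a)) := by
    ext b
    simp [and_comm]
  rw [add_comm, ← Set.ncard_coe_finset, ← hinter, Set.ncard_inter_add_ncard_sdiff_eq_ncard]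
  rfl

lemma dOut_singleton [Finite V] (G : SimpleGraph V) (v : V) : dOut G {v} = degN G v := by
  classical
  simpa [Finset.filter_singleton] using dOut_add_sum_card_filter_adj (G := G) {v}

lemma dOut_pair_add_two [Finite V] {x y : V} (hxy : G.Adj x y) :
    dOut G {x, y} + 2 = degN G x + degN G y := by
  classical
  have := dOut_add_sum_card_filter_adj (G := G) {x, y}
  rw [Finset.coe_pair, Finset.sum_pair hxy.ne, Finset.sum_pair hxy.ne] at this
  simpa [Finset.filter_insert, Finset.filter_singleton, hxy, hxy.symm] using this

lemma degN_add_degN_add_degN_le_dOut_triple [Finite V] (hG : G.CliqueFree 3) {a b c : V}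
    (hab : a ≠ b) (hac : a ≠ c) (hbc : b ≠ c) :
    degN G a + degN G b + degN G c ≤ dOut G {a, b, c} + 4 := by
  classical
  have hsum := dOut_add_sum_card_filter_adj (G := G) {a, b, c}
  have hA : a ∉ ({b, c} : Finset V) := by simp [hab, hac]
  rw [Finset.coe_insert, Finset.coe_pair, Finset.sum_insert hA, Finset.sum_pair hbc,
    Finset.sum_insert hA, Finset.sum_pair hbc] at hsum
  have htri := hG {a, b, c}
  rw [is3Clique_triple_iff] at htri
  by_cases h1 : G.Adj a b <;> by_cases h2 : G.Adj a c <;> by_cases h3 : G.Adj b c <;>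
    simp_all [Finset.filter_insert, Finset.filter_singleton, adj_comm] <;> omega

lemma CliqueFree.not_adj_of_adj_of_adj (hG : G.CliqueFree 3) {a b c : V} (hab : G.Adj a b)
    (hac : G.Adj a c) : ¬G.Adj b c := fun hbc =>
  isIndepSet_neighborSet_of_triangleFree G hG a hab hac hbc.ne hbc

lemma cliqueFree_three_of_four_le_egirth (hg : 4 ≤ G.egirth) : G.CliqueFree 3 := by
  by_contra h
  rw [not_cliqueFree_iff_top_isContained] at h
  have := h.egirth_le
  rw [egirth_top (by simp)] at this
  exact absurd (hg.trans this) (by decide)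

lemma Reachable.exists_adj_of_ne {u w : V} (h : G.Reachable u w) (hne : u ≠ w) :
    ∃ a, G.Adj u a :=
  let ⟨p⟩ := h
  ⟨_, p.adj_snd (Walk.not_nil_of_ne hne)⟩

lemma Reachable.mem_of_forall_adj_mem {s : Set V} (hs : ∀ a b, G.Adj a b → a ∈ s → b ∈ s)
    {u w : V} (h : G.Reachable u w) (hu : u ∈ s) : w ∈ s := by
  obtain ⟨p⟩ := h
  induction p with
  | nil => exact hu
  | cons hadj _ ih => exact ih (hs _ _ hadj hu)

lemma not_reachable_deleteEdges_edgeBoundary {X : Set V} {u w : V} (hu : u ∈ X) (hw : w ∉ X) :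
    ¬(G.deleteEdges (G.edgeBoundary X)).Reachable u w := fun h =>
  hw <| h.mem_of_forall_adj_mem (fun a b hab ha => by
    by_contra hb
    exact (deleteEdges_adj.mp hab).2 ⟨(deleteEdges_adj.mp hab).1, a, ha, b, hb, rfl⟩) hu

lemma ConnectedComponent.adj_of_supp_eq_pair (c : G.ConnectedComponent) {x y : V}
    (hc : c.supp = {x, y}) (hxy : x ≠ y) : G.Adj x y := by
  have hx : x ∈ c.supp := hc ▸ Set.mem_insert x {y}
  have hy : y ∈ c.supp := hc ▸ Set.mem_insert_of_mem x rfl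
  obtain ⟨a, ha⟩ := (c.reachable_of_mem_supp hx hy).exists_adj_of_ne hxy
  have : a ∈ c.supp := c.mem_supp_of_adj_mem_supp hx ha
  rw [hc] at this
  rcases this with rfl | rfl
  · exact absurd ha (G.irrefl)
  · exact ha

lemma edgeBoundary_supp_subset (S : Set (Sym2 V)) (c : (G.deleteEdges S).ConnectedComponent) :
    G.edgeBoundary c.supp ⊆ S := by
  rintro _ ⟨he, a, ha, b, hb, rfl⟩
  by_contra heS
  exact hb (c.mem_supp_of_adj_mem_supp ha (deleteEdges_adj.mpr ⟨he, heS⟩))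

lemma dOut_supp_le_ncard [Finite V] (S : Set (Sym2 V)) (c : (G.deleteEdges S).ConnectedComponent) :
    dOut G c.supp ≤ S.ncard :=
  Set.ncard_le_ncard (edgeBoundary_supp_subset S c)

end SimpleGraph

section ExtraEdgeCut

variable {G : SimpleGraph V} {h : ℕ} {S : Set (Sym2 V)}

lemma lambdaH_le_ncard (hS : IsExtraEdgeCut G h S) : lambdaH G h ≤ S.ncard :=
  Nat.sInf_le ⟨S, hS, rfl⟩

lemma IsExtraEdgeCut.succ (hS : IsExtraEdgeCut G h S)
    (hne : ∀ c : (G.deleteEdges S).ConnectedComponent, c.supp.ncard ≠ h + 1) :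
    IsExtraEdgeCut G (h + 1) S :=
  ⟨hS.1, hS.2.1, fun c => lt_of_le_of_ne (hS.2.2 c) (hne c).symm⟩

lemma IsExtraEdgeCut.union_of_deleteEdges {F : Set (Sym2 V)} (hF : F ⊆ G.edgeSet)
    (hS : IsExtraEdgeCut (G.deleteEdges F) h S) : IsExtraEdgeCut G h (F ∪ S) := by
  obtain ⟨hSsub, hdisc, hcomp⟩ := hS
  rw [edgeSet_deleteEdges] at hSsub
  rw [IsExtraEdgeCut, ← deleteEdges_deleteEdges]
  exact ⟨Set.union_subset hF fun e he => (hSsub he).1, hdisc, hcomp⟩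

lemma xiH_one_le_dOut_pair {x y : V} (hxy : G.Adj x y) : xiH G 1 ≤ dOut G {x, y} :=
  Nat.sInf_le ⟨{x, y}, Set.ncard_pair hxy.ne, induce_pair_connected_of_adj hxy, rfl⟩

lemma xiH_one_add_two_le [Finite V] {x y : V} (hxy : G.Adj x y) :
    xiH G 1 + 2 ≤ degN G x + degN G y :=
  (dOut_pair_add_two hxy) ▸ Nat.add_le_add_right (xiH_one_le_dOut_pair hxy) 2

lemma xiH_one_le_ncard [Finite V] (c : (G.deleteEdges S).ConnectedComponent)
    (hc : c.supp.ncard = 2) : xiH G 1 ≤ S.ncard := by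
  obtain ⟨x, y, hxy, hsupp⟩ := Set.ncard_eq_two.mp hc
  have hadj : G.Adj x y := (deleteEdges_adj.mp (c.adj_of_supp_eq_pair hsupp hxy)).1
  calc xiH G 1 ≤ dOut G {x, y} := xiH_one_le_dOut_pair hadj
    _ = dOut G c.supp := by rw [hsupp]
    _ ≤ S.ncard := dOut_supp_le_ncard S c

/-- Every vertex keeps a neighbor on its own side of the cut: `x` and `y` keep each other, and any
other vertex has two neighbors, which cannot both lie in `{x, y}` as `G` has no triangle. -/
lemma isExtraEdgeCut_one_edgeBoundary_pair [Finite V] (hG : G.CliqueFree 3)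
    (hdeg : ∀ v, 2 ≤ degN G v) {x y : V} (hxy : G.Adj x y) :
    IsExtraEdgeCut G 1 (G.edgeBoundary {x, y}) := by
  set X : Set V := {x, y}
  have hnbr : ∀ v, ∃ w, G.Adj v w ∧ (v ∈ X ↔ w ∈ X) := by
    intro v
    by_cases hv : v ∈ X
    · rcases hv with rfl | rfl
      · exact ⟨y, hxy, by simp [X]⟩
      · exact ⟨x, hxy.symm, by simp [X]⟩
    · by_contra! hall
      have hsub : G.neighborSet v ⊆ X := fun w hw =>
        ((hall w hw).resolve_left fun h => hv h.1).2
      have heq : G.neighborSet v = X :=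
        Set.eq_of_subset_of_ncard_le hsub (by rw [Set.ncard_pair hxy.ne]; exact hdeg v)
      have hvx : G.Adj v x := show x ∈ G.neighborSet v from heq ▸ Set.mem_insert x {y}
      have hvy : G.Adj v y := show y ∈ G.neighborSet v from heq ▸ Set.mem_insert_of_mem x rfl
      exact hG.not_adj_of_adj_of_adj hvx hvy hxy
  refine ⟨G.edgeBoundary_subset_edgeSet X, fun hconn => ?_, fun c => ?_⟩
  · obtain ⟨z, hxz, hzy⟩ := Set.exists_ne_of_one_lt_ncard (hdeg x) y
    have hz : z ∉ X := by rintro (rfl | rfl) <;> simp_all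
    exact not_reachable_deleteEdges_edgeBoundary (Set.mem_insert x {y}) hz
      (hconn.preconnected x z)
  · obtain ⟨v, hv⟩ := c.nonempty_supp
    obtain ⟨w, hvw, hside⟩ := hnbr v
    have hadj : (G.deleteEdges (G.edgeBoundary X)).Adj v w :=
      deleteEdges_adj.mpr ⟨hvw, mk_notMem_edgeBoundary hside⟩
    exact (Set.one_lt_ncard_iff).mpr ⟨v, w, hv, c.mem_supp_of_adj_mem_supp hv hadj, hadj.ne⟩

end ExtraEdgeCut

section Degree

variable {G : SimpleGraph V}

lemma exists_adj_of_degN_ne_zero {v : V} (h : degN G v ≠ 0) : ∃ w, G.Adj v w :=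
  Set.nonempty_of_ncard_ne_zero h

lemma exists_dOut_pair_eq_xiH_one {x₀ y₀ : V} (h₀ : G.Adj x₀ y₀) :
    ∃ x y, G.Adj x y ∧ dOut G {x, y} = xiH G 1 := by
  obtain ⟨X, hX, hconn, hdOut⟩ := Nat.sInf_mem (s := {n | ∃ X : Set V, X.ncard = 1 + 1 ∧
    (G.induce X).Connected ∧ dOut G X = n})
    ⟨_, {x₀, y₀}, Set.ncard_pair h₀.ne, induce_pair_connected_of_adj h₀, rfl⟩
  obtain ⟨x, y, hxy, rfl⟩ := Set.ncard_eq_two.mp hX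
  obtain ⟨⟨a, ha⟩, hxa⟩ := (hconn.preconnected ⟨x, Set.mem_insert x {y}⟩
    ⟨y, Set.mem_insert_of_mem x rfl⟩).exists_adj_of_ne (by simpa using hxy)
  rcases ha with rfl | rfl
  · exact absurd hxa (SimpleGraph.irrefl _)
  · exact ⟨x, a, hxa, hdOut⟩

variable [Finite V]

lemma degN_deleteEdges_le (F : Set (Sym2 V)) (v : V) : degN (G.deleteEdges F) v ≤ degN G v :=
  Set.ncard_le_ncard fun _ hw => (deleteEdges_adj.mp hw).1

lemma degN_deleteEdges_lt {F : Set (Sym2 V)} {a b : V} (hab : G.Adj a b) (hF : s(a, b) ∈ F) :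
    degN (G.deleteEdges F) a < degN G a :=
  Set.ncard_lt_ncard ⟨fun _ hw => (deleteEdges_adj.mp hw).1,
    fun hsub => (deleteEdges_adj.mp (hsub hab)).2 hF⟩

lemma degN_le_degN_deleteEdges_add_ncard (F : Set (Sym2 V)) (v : V) :
    degN G v ≤ degN (G.deleteEdges F) v + F.ncard := by
  have hsub : G.neighborSet v ⊆ (G.deleteEdges F).neighborSet v ∪ {w | s(v, w) ∈ F} :=
    fun w hw => by
      by_cases hF : s(v, w) ∈ F
      · exact Or.inr hF
      · exact Or.inl (deleteEdges_adj.mpr ⟨hw, hF⟩)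
  calc degN G v ≤ ((G.deleteEdges F).neighborSet v ∪ {w | s(v, w) ∈ F}).ncard :=
        Set.ncard_le_ncard hsub
    _ ≤ degN (G.deleteEdges F) v + {w | s(v, w) ∈ F}.ncard := Set.ncard_union_le _ _
    _ ≤ degN (G.deleteEdges F) v + F.ncard := by
        gcongr
        exact Set.ncard_le_ncard_of_injOn _ (fun _ hw => hw)
          (fun _ _ _ _ h => Sym2.congr_right.mp h)

end Degree

section Regular

variable [Finite V] {G : SimpleGraph V} {k : ℕ} {F : Set (Sym2 V)}

lemma three_mul_sub_four_le_xiH_two [Nonempty V] (hreg : ∀ v, degN G v = k)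
    (hG : G.CliqueFree 3) (hk : 2 ≤ k) : 3 * k - 4 ≤ xiH G 2 := by
  obtain ⟨x⟩ := ‹Nonempty V›
  obtain ⟨y, hxy⟩ := exists_adj_of_degN_ne_zero (G := G) (v := x) (by rw [hreg]; omega)
  obtain ⟨z, hyz, hzx⟩ := Set.exists_ne_of_one_lt_ncard (s := G.neighborSet y)
    (by rw [← degN, hreg]; omega) x
  have hpath : (G.induce {x, y, z}).Connected := by
    have := induce_union_connected (induce_pair_connected_of_adj hxy).preconnected
      (induce_pair_connected_of_adj hyz).preconnected ⟨y, by simp⟩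
    rwa [Set.insert_union, Set.singleton_union,
      Set.insert_eq_of_mem (Set.mem_insert y {z})] at this
  refine le_csInf ⟨_, {x, y, z}, Set.ncard_eq_three.mpr ⟨x, y, z, hxy.ne, hzx.symm, hyz.ne, rfl⟩,
    hpath, rfl⟩ ?_
  rintro _ ⟨X, hX, -, rfl⟩
  obtain ⟨a, b, c, hab, hac, hbc, rfl⟩ := Set.ncard_eq_three.mp hX
  have := degN_add_degN_add_degN_le_dOut_triple hG hab hac hbc
  rw [hreg, hreg, hreg] at this
  omega

lemma three_mul_sub_four_le_ncard [Nonempty V] (hreg : ∀ v, degN G v = k) (hG : G.CliqueFree 3)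
    (hk : 2 ≤ k) (hopt : lambdaH G 2 = xiH G 2) {T : Set (Sym2 V)} (hT : IsExtraEdgeCut G 2 T) :
    3 * k - 4 ≤ T.ncard :=
  (three_mul_sub_four_le_xiH_two hreg hG hk).trans (hopt ▸ lambdaH_le_ncard hT)

lemma le_dOut_supp_of_ncard_le_two (hreg : ∀ v, degN G v = k) (hk : 2 ≤ k)
    (c : (G.deleteEdges F).ConnectedComponent) (hc : c.supp.ncard ≤ 2) : k ≤ dOut G c.supp := by
  have hpos : 0 < c.supp.ncard := (Set.ncard_pos).mpr c.nonempty_supp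
  obtain h1 | h2 : c.supp.ncard = 1 ∨ c.supp.ncard = 2 := by omega
  · obtain ⟨v, hv⟩ := Set.ncard_eq_one.mp h1
    rw [hv, dOut_singleton, hreg]
  · obtain ⟨x, y, hxy, hs⟩ := Set.ncard_eq_two.mp h2
    have := dOut_pair_add_two (deleteEdges_adj.mp (c.adj_of_supp_eq_pair hs hxy)).1
    rw [hreg, hreg] at this
    rw [hs]
    omega

/-- A disconnecting set either cuts off a component of at most two vertices, whose boundary has
at least `k` edges, or it is a `2`-extra edge-cut. -/
lemma le_ncard_of_not_connected_deleteEdges [Nonempty V] (hreg : ∀ v, degN G v = k)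
    (hG : G.CliqueFree 3) (hk : 2 ≤ k) (hopt : lambdaH G 2 = xiH G 2) (hF : F ⊆ G.edgeSet)
    (hdisc : ¬(G.deleteEdges F).Connected) : k ≤ F.ncard := by
  by_cases hsmall : ∃ c : (G.deleteEdges F).ConnectedComponent, c.supp.ncard ≤ 2
  · obtain ⟨c, hc⟩ := hsmall
    exact (le_dOut_supp_of_ncard_le_two hreg hk c hc).trans (dOut_supp_le_ncard F c)
  · push Not at hsmall
    have := three_mul_sub_four_le_ncard hreg hG hk hopt ⟨hF, hdisc, hsmall⟩
    omega

lemma two_le_degN_deleteEdges (hreg : ∀ v, degN G v = k) (hk : 2 ≤ k) (hFk : F.ncard ≤ k - 2)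
    (v : V) : 2 ≤ degN (G.deleteEdges F) v := by
  have := degN_le_degN_deleteEdges_add_ncard (G := G) F v
  rw [hreg] at this
  omega

/-- If `F ≠ ∅`, an endpoint of a deleted edge has degree at most `k - 1` in `G - F`, so
`ξ(G - F) ≤ 2k - 3`. -/
lemma xiH_one_deleteEdges_add_ncard_lt [Nonempty V] (hreg : ∀ v, degN G v = k) (hk : 3 ≤ k)
    (hF : F ⊆ G.edgeSet) (hFk : F.ncard ≤ k - 2) :
    xiH (G.deleteEdges F) 1 + F.ncard < 3 * k - 4 := by
  rcases F.eq_empty_or_nonempty with rfl | ⟨e, he⟩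
  · rw [deleteEdges_empty, Set.ncard_empty]
    obtain ⟨x⟩ := ‹Nonempty V›
    obtain ⟨y, hxy⟩ := exists_adj_of_degN_ne_zero (G := G) (v := x) (by rw [hreg]; omega)
    have := xiH_one_add_two_le hxy
    rw [hreg, hreg] at this
    omega
  · obtain ⟨⟨a, b⟩, rfl⟩ := Sym2.mk_surjective e
    have hlt := degN_deleteEdges_lt (a := a) (b := b) (hF he) he
    have ha := two_le_degN_deleteEdges hreg (by omega) hFk a
    obtain ⟨c, hac⟩ := exists_adj_of_degN_ne_zero (G := G.deleteEdges F) (v := a) (by omega)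
    have := xiH_one_add_two_le hac
    have := degN_deleteEdges_le (G := G) F c
    rw [hreg] at hlt this
    omega

/-- A `1`-extra edge-cut `S` of `G - F` isolating no edge makes `F ∪ S` a `2`-extra edge-cut of
`G`, so `|F| + |S| ≥ 3k - 4`. -/
lemma xiH_one_deleteEdges_lt_ncard [Nonempty V] (hreg : ∀ v, degN G v = k)
    (hG : G.CliqueFree 3) (hk : 3 ≤ k) (hopt : lambdaH G 2 = xiH G 2) (hF : F ⊆ G.edgeSet)
    (hFk : F.ncard ≤ k - 2) {S : Set (Sym2 V)} (hS : IsExtraEdgeCut (G.deleteEdges F) 1 S)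
    (hne : ∀ c : ((G.deleteEdges F).deleteEdges S).ConnectedComponent, c.supp.ncard ≠ 2) :
    xiH (G.deleteEdges F) 1 < S.ncard := by
  have hFS := three_mul_sub_four_le_ncard hreg hG (by omega) hopt
    ((hS.succ hne).union_of_deleteEdges hF)
  have := Set.ncard_union_le F S
  have := xiH_one_deleteEdges_add_ncard_lt hreg hk hF hFk
  omega

lemma superLambda_deleteEdges [Nonempty V] (hreg : ∀ v, degN G v = k) (hG : G.CliqueFree 3)
    (hk : 3 ≤ k) (hopt : lambdaH G 2 = xiH G 2) (hF : F ⊆ G.edgeSet) (hFk : F.ncard ≤ k - 2) :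
    SuperLambda (G.deleteEdges F) 1 := by
  have hdeg := two_le_degN_deleteEdges hreg (by omega) hFk
  set H := G.deleteEdges F
  have hcut : ∀ {x y}, H.Adj x y → IsExtraEdgeCut H 1 (H.edgeBoundary {x, y}) :=
    isExtraEdgeCut_one_edgeBoundary_pair (hG.anti (deleteEdges_le F)) hdeg
  have hlower : ∀ S, IsExtraEdgeCut H 1 S → xiH H 1 ≤ S.ncard := fun S hS => by
    by_cases h2 : ∃ c : (H.deleteEdges S).ConnectedComponent, c.supp.ncard = 2
    · obtain ⟨c, hc⟩ := h2
      exact xiH_one_le_ncard c hc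
    · push Not at h2
      exact (xiH_one_deleteEdges_lt_ncard hreg hG hk hopt hF hFk hS h2).le
  obtain ⟨v⟩ := ‹Nonempty V›
  obtain ⟨w, hvw⟩ := exists_adj_of_degN_ne_zero (G := H) (v := v) (by have := hdeg v; omega)
  obtain ⟨x, y, hxy, hxi⟩ := exists_dOut_pair_eq_xiH_one hvw
  have hlam : lambdaH H 1 = xiH H 1 :=
    le_antisymm (hxi ▸ lambdaH_le_ncard (hcut hxy))
      (le_csInf ⟨_, _, hcut hxy, rfl⟩ fun _ ⟨S, hS, hn⟩ => hn ▸ hlower S hS)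
  refine ⟨?_, ⟨_, hcut hxy⟩, hlam, fun S hS hSmin => ?_⟩
  · by_contra hdisc
    have := le_ncard_of_not_connected_deleteEdges hreg hG (by omega) hopt hF hdisc
    omega
  · by_contra! hne
    exact (xiH_one_deleteEdges_lt_ncard hreg hG hk hopt hF hFk hS hne).ne' (hSmin.trans hlam)

end Regular

section Persistence

variable {G : SimpleGraph V} {h : ℕ}

lemma ncard_incidenceSet (G : SimpleGraph V) (v : V) : (G.incidenceSet v).ncard = degN G v := by
  classical
  rw [← Nat.card_coe_set_eq, Nat.card_congr (G.incidenceSetEquivNeighborSet v),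
    Nat.card_coe_set_eq]
  rfl

lemma not_connected_deleteEdges_incidenceSet {v w : V} (hvw : G.Adj v w) :
    ¬(G.deleteEdges (G.incidenceSet v)).Connected := fun hconn =>
  let ⟨_, ha⟩ := (hconn.preconnected v w).exists_adj_of_ne hvw.ne
  (deleteEdges_adj.mp ha).2 ⟨(deleteEdges_adj.mp ha).1, Sym2.mem_mk_left _ _⟩

lemma degN_sub_one_mem_upperBounds {v w : V} (hvw : G.Adj v w) :
    degN G v - 1 ∈ upperBounds {m : ℕ | ∀ F : Set (Sym2 V), F ⊆ G.edgeSet → F.ncard ≤ m →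
      SuperLambda (G.deleteEdges F) h} := fun m hm => by
  by_contra! hlt
  exact not_connected_deleteEdges_incidenceSet hvw
    (hm _ (G.incidenceSet_subset v) (by rw [ncard_incidenceSet]; omega)).1

lemma rhoH_le_degN_sub_one {v w : V} (hvw : G.Adj v w) : rhoH G h ≤ degN G v - 1 :=
  csSup_le' (degN_sub_one_mem_upperBounds hvw)

lemma le_rhoH {v w : V} (hvw : G.Adj v w) {m : ℕ}
    (hm : ∀ F : Set (Sym2 V), F ⊆ G.edgeSet → F.ncard ≤ m → SuperLambda (G.deleteEdges F) h) :
    m ≤ rhoH G h :=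
  le_csSup ⟨_, degN_sub_one_mem_upperBounds hvw⟩ hm

end Persistence

theorem stmt11_general {V : Type*} [Fintype V] (G : SimpleGraph V) (k : ℕ) (hk : 4 ≤ k)
    (hconn : G.Connected) (hreg : ∀ v, degN G v = k)
    (hopt : lambdaH G 2 = xiH G 2)
    (hg : (4 : ℕ∞) ≤ G.egirth) :
    SuperLambda G 1 ∧ k - 2 ≤ rhoH G 1 ∧ rhoH G 1 ≤ k - 1 := by
  have hne : Nonempty V := hconn.nonempty
  have hsuper : ∀ F : Set (Sym2 V), F ⊆ G.edgeSet → F.ncard ≤ k - 2 →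
      SuperLambda (G.deleteEdges F) 1 := fun F hF hFk =>
    superLambda_deleteEdges hreg (cliqueFree_three_of_four_le_egirth hg) (by omega) hopt hF hFk
  obtain ⟨v⟩ := hne
  obtain ⟨w, hvw⟩ := exists_adj_of_degN_ne_zero (G := G) (v := v) (by rw [hreg]; omega)
  refine ⟨?_, le_rhoH hvw hsuper, hreg v ▸ rhoH_le_degN_sub_one hvw⟩
  simpa using hsuper ∅ (Set.empty_subset _) (by simp)

/-- A `k`-regular `λ''`-optimal graph with `k ≥ 4` and girth at least `4` is super-`λ'`
and satisfies `k - 2 ≤ ρ'(G) ≤ k - 1`. -/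
theorem stmt11 {V : Type*} [Fintype V] (G : SimpleGraph V) (k : ℕ) (hk : 4 ≤ k)
    (hconn : G.Connected) (hreg : ∀ v, degN G v = k)
    (hl2 : LambdaConn G 2) (hopt : lambdaH G 2 = xiH G 2)
    (hg : (4 : ℕ∞) ≤ G.egirth) :
    SuperLambda G 1 ∧ k - 2 ≤ rhoH G 1 ∧ rhoH G 1 ≤ k - 1 :=
  stmt11_general G k hk hconn hreg hopt hg
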